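/- arXiv:2511.18661 — 4 statements merged into one kernel-verified Lean document; each statement's English description precedes it below -/
import Mathlib

section
/- Let Q be symmetric positive definite and w* ≠ 0. For the loss L(w) = 3s^2 + 3s*^2 - 4u^2 - 2 s* s with s = w^T Qw, u = w^T Q w*, s* = (w*)^T Q w*, the set of critical points (zeros of ∇L) is exactly {0, w*, -w*} ∪ {w : u(w) = 0 and s(w) = s*/3}. -/
/-!
Since `Q` is invertible, `∇L(w) = 0` says `(12 s - 4 s*) w = 8 u w*`. Either the coefficient
`12 s - 4 s*` vanishes, which forces `u = 0` and `s = s*/3`, or `w = t w*` lies on the line of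
`w*`, where `∇L(t w*) = 12 s* t (t² - 1) Q w*` vanishes exactly for `t ∈ {0, 1, -1}`.
-/

open Matrix

/-- The gradient `∇L(w)`, with `wstar` in the role of `w*`. -/
noncomputable def lossGrad {n : Type*} [Fintype n] (Q : Matrix n n ℝ) (wstar w : n → ℝ) :
    n → ℝ :=
  (12 * (w ⬝ᵥ Q.mulVec w) - 4 * (wstar ⬝ᵥ Q.mulVec wstar)) • Q.mulVec w
    - (8 * (w ⬝ᵥ Q.mulVec wstar)) • Q.mulVec wstar

section

variable {n : Type*} [Fintype n] {Q : Matrix n n ℝ} {v : n → ℝ}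

theorem lossGrad_eq_zero_iff [DecidableEq n] (hQ : Q.PosDef) (w : n → ℝ) :
    lossGrad Q v w = 0 ↔
      (12 * (w ⬝ᵥ Q *ᵥ w) - 4 * (v ⬝ᵥ Q *ᵥ v)) • w = (8 * (w ⬝ᵥ Q *ᵥ v)) • v := by
  rw [lossGrad, sub_eq_zero, ← mulVec_smul, ← mulVec_smul]
  exact (mulVec_injective_of_isUnit hQ.isUnit).eq_iff

theorem lossGrad_smul_self (t : ℝ) :
    lossGrad Q v (t • v) = (12 * (v ⬝ᵥ Q *ᵥ v) * (t * (t ^ 2 - 1))) • Q *ᵥ v := by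
  simp only [lossGrad, mulVec_smul, smul_dotProduct, dotProduct_smul, smul_eq_mul, smul_smul,
    ← sub_smul]
  ring_nf

theorem lossGrad_smul_self_eq_zero_iff (hQ : Q.PosDef) (hv : v ≠ 0) (t : ℝ) :
    lossGrad Q v (t • v) = 0 ↔ t = 0 ∨ t = 1 ∨ t = -1 := by
  have hs : 0 < v ⬝ᵥ Q *ᵥ v := by simpa using hQ.dotProduct_mulVec_pos hv
  have hQv : Q *ᵥ v ≠ 0 := fun h => by simp [h] at hs
  rw [lossGrad_smul_self, smul_eq_zero_iff_left hQv, mul_eq_zero, or_iff_right (by positivity),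
    mul_eq_zero, sub_eq_zero, sq_eq_one_iff]

end

theorem stmt_3_general (d : ℕ) (Q : Matrix (Fin d) (Fin d) ℝ)
    (hQ : Q.PosDef) (wstar : Fin d → ℝ) (hwstar : wstar ≠ 0)
    (w : Fin d → ℝ) :
    (12 * (w ⬝ᵥ Q.mulVec w) - 4 * (wstar ⬝ᵥ Q.mulVec wstar)) • Q.mulVec w
        - (8 * (w ⬝ᵥ Q.mulVec wstar)) • Q.mulVec wstar = 0
    ↔ (w = 0 ∨ w = wstar ∨ w = -wstar ∨
        (w ⬝ᵥ Q.mulVec wstar = 0 ∧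
          w ⬝ᵥ Q.mulVec w = (wstar ⬝ᵥ Q.mulVec wstar) / 3)) := by
  change lossGrad Q wstar w = 0 ↔ _
  constructor
  · intro hcrit
    have h := (lossGrad_eq_zero_iff hQ w).1 hcrit
    set a := 12 * (w ⬝ᵥ Q *ᵥ w) - 4 * (wstar ⬝ᵥ Q *ᵥ wstar)
    by_cases ha : a = 0
    · rw [ha, zero_smul, eq_comm, smul_eq_zero_iff_left hwstar] at h
      exact Or.inr <| Or.inr <| Or.inr ⟨by linarith, by linarith⟩
    · have hw : w = (8 * (w ⬝ᵥ Q *ᵥ wstar) / a) • wstar := by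
        rw [div_eq_inv_mul, mul_smul, ← h, inv_smul_smul₀ ha]
      rw [hw, lossGrad_smul_self_eq_zero_iff hQ hwstar] at hcrit
      rcases hcrit with ht | ht | ht <;> rw [hw, ht] <;> simp
  · rintro (rfl | rfl | rfl | ⟨hu, hs⟩)
    · simpa using (lossGrad_smul_self_eq_zero_iff hQ hwstar 0).2 (by norm_num)
    · simpa using (lossGrad_smul_self_eq_zero_iff hQ hwstar 1).2 (by norm_num)
    · simpa using (lossGrad_smul_self_eq_zero_iff hQ hwstar (-1)).2 (by norm_num)
    · rw [lossGrad, hu, hs, mul_zero, zero_smul, sub_zero, smul_eq_zero]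
      left; ring

/-- Critical points of the phase-retrieval loss: with
`∇L(w) = (12 s - 4 s*) Q w - 8 u Q w*`, `s = wᵀQw`, `u = wᵀQw*`,
`s* = (w*)ᵀQw*`, `Q` symmetric positive definite and `w* ≠ 0`, the critical
points are exactly `{0, w*, -w*} ∪ {w : u = 0 ∧ s = s*/3}`. -/
theorem stmt_3 (d : ℕ) (Q : Matrix (Fin d) (Fin d) ℝ) (hsym : Q.IsSymm)
    (hQ : Q.PosDef) (wstar : Fin d → ℝ) (hwstar : wstar ≠ 0)
    (w : Fin d → ℝ) :
    (12 * (w ⬝ᵥ Q.mulVec w) - 4 * (wstar ⬝ᵥ Q.mulVec wstar)) • Q.mulVec w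
        - (8 * (w ⬝ᵥ Q.mulVec wstar)) • Q.mulVec wstar = 0
    ↔ (w = 0 ∨ w = wstar ∨ w = -wstar ∨
        (w ⬝ᵥ Q.mulVec wstar = 0 ∧
          w ⬝ᵥ Q.mulVec w = (wstar ⬝ᵥ Q.mulVec wstar) / 3)) :=
  stmt_3_general d Q hQ wstar hwstar w
end

section
/- With L as above (Q positive definite, w* ≠ 0): 0 is a strict local maximum of L (the Hessian at 0 is negative definite), and ±w* are strict global minima of L with L(±w*) = 0 and L(w) ≥ 0 for all w. -/
/-!
Writing `q(w) = wᵀQw` and `s = q(w*)`, one has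
`L(w) = 3 (q(w) - s)² + 4 (q(w) s - (wᵀQw*)²)`, and the second term is nonnegative by
Cauchy–Schwarz for the inner product `⟨x, y⟩ = xᵀQy`. So `L ≥ 0`, and `L(w) = 0` forces
`q(w) = s` together with equality in Cauchy–Schwarz, i.e. `w = c w*` with `c² = 1`.
Near `0`, `L(w) - L(0) ≤ q(w) (3 q(w) - 2 s) < 0`, and the Hessian at `0` is
`4 s Q + 8 (Qw*)(Qw*)ᵀ`, a positive definite plus a positive semidefinite matrix.
-/

open Matrix

namespace Matrix

variable {n : Type*} [Fintype n] {Q : Matrix n n ℝ}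

lemma PosSemidef.isSymm_toBilin' [DecidableEq n] (hQ : Q.PosSemidef) :
    LinearMap.IsSymm (toBilin' Q) :=
  LinearMap.BilinForm.isSymm_iff.mp
    (isSymm_toBilin'_iff_isSymm.mpr (isHermitian_iff_isSymm.mp hQ.isHermitian))

lemma PosSemidef.sq_dotProduct_mulVec_le (hQ : Q.PosSemidef) (x y : n → ℝ) :
    (x ⬝ᵥ Q *ᵥ y) ^ 2 ≤ (x ⬝ᵥ Q *ᵥ x) * (y ⬝ᵥ Q *ᵥ y) := by
  classical
  simpa only [toBilin'_apply'] using (toBilin' Q).apply_sq_le_of_symm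
    (fun z ↦ by simpa [toBilin'_apply'] using hQ.dotProduct_mulVec_nonneg z) hQ.isSymm_toBilin' x y

lemma PosDef.exists_smul_eq_of_sq_dotProduct_mulVec_eq (hQ : Q.PosDef) {x y : n → ℝ}
    (hy : y ≠ 0) (h : (x ⬝ᵥ Q *ᵥ y) ^ 2 = (x ⬝ᵥ Q *ᵥ x) * (y ⬝ᵥ Q *ᵥ y)) :
    ∃ c : ℝ, c • y = x := by
  classical
  have hsymm := hQ.posSemidef.isSymm_toBilin'
  have hdep : ¬ LinearIndependent ℝ ![y, x] := by
    rw [← (toBilin' Q).apply_sq_lt_iff_linearIndependent_of_symm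
      (fun z hz ↦ by simpa [toBilin'_apply'] using hQ.dotProduct_mulVec_pos hz) hsymm,
      ← hsymm.eq x y]
    simp only [RingHom.id_apply, toBilin'_apply', h, mul_comm, lt_irrefl, not_false_eq_true]
  simpa [LinearIndependent.pair_iff' hy] using hdep

lemma PosDef.smul_add_smul_vecMulVec_self (hQ : Q.PosDef) {a b : ℝ} (ha : 0 < a) (hb : 0 ≤ b)
    (u : n → ℝ) : (a • Q + b • vecMulVec u u).PosDef :=
  (hQ.smul ha).add_posSemidef ((posSemidef_vecMulVec_self_star u).smul hb)

end Matrix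

section QuarticLoss

variable {n : Type*} [Fintype n] {Q : Matrix n n ℝ} {wstar : n → ℝ}

def quarticLoss (Q : Matrix n n ℝ) (wstar v : n → ℝ) : ℝ :=
  3 * (v ⬝ᵥ Q *ᵥ v) ^ 2 + 3 * (wstar ⬝ᵥ Q *ᵥ wstar) ^ 2 - 4 * (v ⬝ᵥ Q *ᵥ wstar) ^ 2
    - 2 * (wstar ⬝ᵥ Q *ᵥ wstar) * (v ⬝ᵥ Q *ᵥ v)

lemma quarticLoss_eq (Q : Matrix n n ℝ) (wstar v : n → ℝ) :
    quarticLoss Q wstar v = 3 * (v ⬝ᵥ Q *ᵥ v - wstar ⬝ᵥ Q *ᵥ wstar) ^ 2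
      + 4 * ((v ⬝ᵥ Q *ᵥ v) * (wstar ⬝ᵥ Q *ᵥ wstar) - (v ⬝ᵥ Q *ᵥ wstar) ^ 2) := by
  unfold quarticLoss; ring

lemma quarticLoss_nonneg (hQ : Q.PosSemidef) (v : n → ℝ) : 0 ≤ quarticLoss Q wstar v := by
  rw [quarticLoss_eq]
  have := hQ.sq_dotProduct_mulVec_le v wstar
  positivity

lemma quarticLoss_self (Q : Matrix n n ℝ) (wstar : n → ℝ) : quarticLoss Q wstar wstar = 0 := by
  unfold quarticLoss; ring

lemma quarticLoss_neg (Q : Matrix n n ℝ) (wstar v : n → ℝ) :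
    quarticLoss Q wstar (-v) = quarticLoss Q wstar v := by
  simp only [quarticLoss, mulVec_neg, dotProduct_neg, neg_dotProduct, neg_neg, neg_sq]

lemma eq_or_eq_neg_of_quarticLoss_eq_zero (hQ : Q.PosDef) {v : n → ℝ}
    (h : quarticLoss Q wstar v = 0) : v = wstar ∨ v = -wstar := by
  have hCS := hQ.posSemidef.sq_dotProduct_mulVec_le v wstar
  rw [quarticLoss_eq] at h
  have hnorm : v ⬝ᵥ Q *ᵥ v = wstar ⬝ᵥ Q *ᵥ wstar := by nlinarith
  have heq : (v ⬝ᵥ Q *ᵥ wstar) ^ 2 = (v ⬝ᵥ Q *ᵥ v) * (wstar ⬝ᵥ Q *ᵥ wstar) := by nlinarith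
  rcases eq_or_ne wstar 0 with rfl | hw
  · left
    by_contra hv
    simpa [hnorm] using hQ.dotProduct_mulVec_pos hv
  obtain ⟨c, rfl⟩ := hQ.exists_smul_eq_of_sq_dotProduct_mulVec_eq hw heq
  have hs : 0 < wstar ⬝ᵥ Q *ᵥ wstar := by simpa using hQ.dotProduct_mulVec_pos hw
  have hc : c ^ 2 = 1 := by
    simp only [mulVec_smul, dotProduct_smul, smul_dotProduct, smul_eq_mul] at hnorm
    nlinarith
  rcases sq_eq_one_iff.mp hc with rfl | rfl <;> simp

lemma quarticLoss_pos (hQ : Q.PosDef) {v : n → ℝ} (h₁ : v ≠ wstar) (h₂ : v ≠ -wstar) :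
    0 < quarticLoss Q wstar v :=
  (quarticLoss_nonneg hQ.posSemidef v).lt_of_ne' fun h ↦
    (eq_or_eq_neg_of_quarticLoss_eq_zero hQ h).elim h₁ h₂

lemma quarticLoss_lt_quarticLoss_zero (hQ : Q.PosDef) {v : n → ℝ} (hv : v ≠ 0)
    (hsmall : 3 * (v ⬝ᵥ Q *ᵥ v) < 2 * (wstar ⬝ᵥ Q *ᵥ wstar)) :
    quarticLoss Q wstar v < quarticLoss Q wstar 0 := by
  have hq : 0 < v ⬝ᵥ Q *ᵥ v := by simpa using hQ.dotProduct_mulVec_pos hv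
  simp only [quarticLoss, mulVec_zero, dotProduct_zero, zero_dotProduct]
  nlinarith [sq_nonneg (v ⬝ᵥ Q *ᵥ wstar)]

lemma exists_quarticLoss_lt_quarticLoss_zero (hQ : Q.PosDef) (hw : wstar ≠ 0) :
    ∃ ε > 0, ∀ v : n → ℝ, v ≠ 0 → ‖v‖ < ε → quarticLoss Q wstar v < quarticLoss Q wstar 0 := by
  have hs : 0 < wstar ⬝ᵥ Q *ᵥ wstar := by simpa using hQ.dotProduct_mulVec_pos hw
  have hcont : Continuous fun v : n → ℝ ↦ 3 * (v ⬝ᵥ Q *ᵥ v) := by fun_prop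
  have hsmall : ∀ᶠ v in nhds 0, 3 * (v ⬝ᵥ Q *ᵥ v) < 2 * (wstar ⬝ᵥ Q *ᵥ wstar) :=
    hcont.continuousAt.eventually_lt continuousAt_const (by simpa using hs)
  obtain ⟨ε, hε, hball⟩ := Metric.eventually_nhds_iff_ball.mp hsmall
  exact ⟨ε, hε, fun v hv hvε ↦
    quarticLoss_lt_quarticLoss_zero hQ hv (hball v (by simpa using hvε))⟩

end QuarticLoss

theorem stmt_4_general (d : ℕ) (Q : Matrix (Fin d) (Fin d) ℝ)
    (hQ : Q.PosDef) (wstar : Fin d → ℝ) (hwstar : wstar ≠ 0)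
    (L : (Fin d → ℝ) → ℝ)
    (hL : L = fun v =>
      3 * (v ⬝ᵥ Q.mulVec v) ^ 2 + 3 * (wstar ⬝ᵥ Q.mulVec wstar) ^ 2
        - 4 * (v ⬝ᵥ Q.mulVec wstar) ^ 2
        - 2 * (wstar ⬝ᵥ Q.mulVec wstar) * (v ⬝ᵥ Q.mulVec v)) :
    (∃ ε > 0, ∀ w : Fin d → ℝ, w ≠ 0 → ‖w‖ < ε → L w < L 0)
    ∧ (-((-(4 * (wstar ⬝ᵥ Q.mulVec wstar))) • Q
          - (8 : ℝ) • vecMulVec (Q.mulVec wstar) (Q.mulVec wstar))).PosDef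
    ∧ L wstar = 0
    ∧ L (-wstar) = 0
    ∧ (∀ w, 0 ≤ L w)
    ∧ (∀ w, w ≠ wstar → w ≠ -wstar → 0 < L w) := by
  obtain rfl : L = quarticLoss Q wstar := hL
  have hs : 0 < wstar ⬝ᵥ Q *ᵥ wstar := by simpa using hQ.dotProduct_mulVec_pos hwstar
  refine ⟨exists_quarticLoss_lt_quarticLoss_zero hQ hwstar, ?_, quarticLoss_self Q wstar,
    (quarticLoss_neg Q wstar wstar).trans (quarticLoss_self Q wstar),
    quarticLoss_nonneg hQ.posSemidef, fun _ ↦ quarticLoss_pos hQ⟩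
  rw [neg_sub, neg_smul, sub_neg_eq_add, add_comm]
  exact hQ.smul_add_smul_vecMulVec_self (by positivity) (by norm_num) _

/-- `0` is a strict local maximum of the loss `L` (with negative definite Hessian
`-4 s* Q - 8 (Qw*)(Qw*)ᵀ` at `0`), and `±w*` are strict global minima with
`L(±w*) = 0` and `L(w) ≥ 0` for all `w`. -/
theorem stmt_4 (d : ℕ) (Q : Matrix (Fin d) (Fin d) ℝ) (hsym : Q.IsSymm)
    (hQ : Q.PosDef) (wstar : Fin d → ℝ) (hwstar : wstar ≠ 0)
    (L : (Fin d → ℝ) → ℝ)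
    (hL : L = fun v =>
      3 * (v ⬝ᵥ Q.mulVec v) ^ 2 + 3 * (wstar ⬝ᵥ Q.mulVec wstar) ^ 2
        - 4 * (v ⬝ᵥ Q.mulVec wstar) ^ 2
        - 2 * (wstar ⬝ᵥ Q.mulVec wstar) * (v ⬝ᵥ Q.mulVec v)) :
    (∃ ε > 0, ∀ w : Fin d → ℝ, w ≠ 0 → ‖w‖ < ε → L w < L 0)
    ∧ (-((-(4 * (wstar ⬝ᵥ Q.mulVec wstar))) • Q
          - (8 : ℝ) • vecMulVec (Q.mulVec wstar) (Q.mulVec wstar))).PosDef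
    ∧ L wstar = 0
    ∧ L (-wstar) = 0
    ∧ (∀ w, 0 ≤ L w)
    ∧ (∀ w, w ≠ wstar → w ≠ -wstar → 0 < L w) :=
  stmt_4_general d Q hQ wstar hwstar L hL
end

section
/- With L as above, every critical point w satisfying w^T Q w* = 0 and w^T Q w = s*/3 is a saddle point: the Hessian ∇²L(w) = 24(Qw)(Qw)^T - 8(Qw*)(Qw*)^T satisfies w^T ∇²L(w) w > 0 and (w*)^T ∇²L(w) w* < 0. -/
open Matrix

section

variable {n R : Type*} [Fintype n] [CommRing R]

theorem dotProduct_vecMulVec_mulVec (a x y b : n → R) :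
    a ⬝ᵥ vecMulVec x y *ᵥ b = (a ⬝ᵥ x) * (y ⬝ᵥ b) := by
  rw [vecMulVec_mulVec, op_smul_eq_smul, dotProduct_smul, smul_eq_mul, mul_comm]

theorem dotProduct_smul_vecMulVec_self_sub_mulVec (a b : R) (x y v : n → R) :
    v ⬝ᵥ (a • vecMulVec x x - b • vecMulVec y y) *ᵥ v
      = a * (v ⬝ᵥ x) ^ 2 - b * (v ⬝ᵥ y) ^ 2 := by
  rw [sub_mulVec, smul_mulVec, smul_mulVec, dotProduct_sub, dotProduct_smul, dotProduct_smul,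
    dotProduct_vecMulVec_mulVec, dotProduct_vecMulVec_mulVec, dotProduct_comm x,
    dotProduct_comm y, smul_eq_mul, smul_eq_mul, sq, sq]

theorem Matrix.IsSymm.dotProduct_mulVec_comm {Q : Matrix n n R} (hQ : Q.IsSymm) (x y : n → R) :
    x ⬝ᵥ Q *ᵥ y = y ⬝ᵥ Q *ᵥ x := by
  conv_lhs => rw [← hQ.eq]
  rw [mulVec_transpose, dotProduct_mulVec, dotProduct_comm]

end

theorem stmt_5_general (d : ℕ) (Q : Matrix (Fin d) (Fin d) ℝ)
    (hQ : Q.PosDef) (wstar w : Fin d → ℝ) (hwstar : wstar ≠ 0)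
    (hu : w ⬝ᵥ Q.mulVec wstar = 0)
    (hs : w ⬝ᵥ Q.mulVec w = (wstar ⬝ᵥ Q.mulVec wstar) / 3) :
    0 < w ⬝ᵥ ((24 : ℝ) • vecMulVec (Q.mulVec w) (Q.mulVec w)
          - (8 : ℝ) • vecMulVec (Q.mulVec wstar) (Q.mulVec wstar)).mulVec w
    ∧ wstar ⬝ᵥ ((24 : ℝ) • vecMulVec (Q.mulVec w) (Q.mulVec w)
          - (8 : ℝ) • vecMulVec (Q.mulVec wstar) (Q.mulVec wstar)).mulVec wstar
        < 0 := by
  have hsymm : Q.IsSymm := isHermitian_iff_isSymm.mp hQ.isHermitian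
  have hs_pos : 0 < wstar ⬝ᵥ Q *ᵥ wstar := by simpa using hQ.dotProduct_mulVec_pos hwstar
  have hu' : wstar ⬝ᵥ Q *ᵥ w = 0 := (hsymm.dotProduct_mulVec_comm _ _).trans hu
  rw [dotProduct_smul_vecMulVec_self_sub_mulVec, dotProduct_smul_vecMulVec_self_sub_mulVec,
    hs, hu, hu']
  constructor <;> nlinarith

/-- Every critical point with `wᵀQw* = 0` and `wᵀQw = s*/3` is a saddle:
the Hessian `H = 24 (Qw)(Qw)ᵀ - 8 (Qw*)(Qw*)ᵀ` satisfies `wᵀHw > 0` and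
`(w*)ᵀHw* < 0`. -/
theorem stmt_5 (d : ℕ) (Q : Matrix (Fin d) (Fin d) ℝ) (hsym : Q.IsSymm)
    (hQ : Q.PosDef) (wstar w : Fin d → ℝ) (hwstar : wstar ≠ 0)
    (hu : w ⬝ᵥ Q.mulVec wstar = 0)
    (hs : w ⬝ᵥ Q.mulVec w = (wstar ⬝ᵥ Q.mulVec wstar) / 3) :
    0 < w ⬝ᵥ ((24 : ℝ) • vecMulVec (Q.mulVec w) (Q.mulVec w)
          - (8 : ℝ) • vecMulVec (Q.mulVec wstar) (Q.mulVec wstar)).mulVec w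
    ∧ wstar ⬝ᵥ ((24 : ℝ) • vecMulVec (Q.mulVec w) (Q.mulVec w)
          - (8 : ℝ) • vecMulVec (Q.mulVec wstar) (Q.mulVec wstar)).mulVec wstar
        < 0 :=
  stmt_5_general d Q hQ wstar w hwstar hu hs
end

section
/- For a > 1 and x > 0, the integral ∫_0^∞ (1 - e^{-(x/t)^a}) dt converges and equals x · Γ(1 - 1/a). -/
/-!
The substitution `y = (x / t) ^ a` turns the integral into
`(x / a) ∫₀^∞ y ^ (-1/a - 1) (1 - e^{-y}) dy`. Integrating by parts against `y ^ (-1/a)`,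
whose product with `1 - e^{-y}` vanishes at both ends because `1 - e^{-y} ≤ y`, gives
`a · ∫₀^∞ y ^ (-1/a) e^{-y} dy = a · Γ(1 - 1/a)`.
-/

open MeasureTheory Real Set Filter Topology

lemma rpow_neg_sub_one_mul_rpow_neg_rpow {a s : ℝ} (ha : a ≠ 0) (hs : 0 < s) :
    s ^ (-a - 1) * (s ^ (-a)) ^ (-a⁻¹ - 1) = 1 := by
  rw [← rpow_mul hs.le, ← rpow_add hs]
  convert rpow_zero s using 2
  field_simp
  ring

lemma eqOn_comp_div_mul_rpow {α : Type*} (g : ℝ → α) {x : ℝ} (a : ℝ) (hx : x ≠ 0) :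
    EqOn (fun s ↦ g ((x / (x * s)) ^ a)) (fun s ↦ g (s ^ (-a))) (Ioi 0) := fun s hs ↦ by
  simp only [div_mul_cancel_left₀ hx, inv_rpow (le_of_lt hs), rpow_neg (le_of_lt hs)]

section ChangeOfVariables

variable {E : Type*} [NormedAddCommGroup E] [NormedSpace ℝ E]

lemma eqOn_jacobian_smul_comp_rpow_neg (g : ℝ → E) {a : ℝ} (ha : a ≠ 0) :
    EqOn (fun s ↦ (|-a| * s ^ (-a - 1)) • ((s ^ (-a)) ^ (-a⁻¹ - 1) • g (s ^ (-a))))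
      (fun s ↦ |a| • g (s ^ (-a))) (Ioi 0) := fun s hs ↦ by
  simp only [smul_smul, abs_neg, mul_assoc, rpow_neg_sub_one_mul_rpow_neg_rpow ha hs, mul_one]

lemma integrableOn_Ioi_comp_div_rpow_iff (g : ℝ → E) {x a : ℝ} (hx : 0 < x) (ha : a ≠ 0) :
    IntegrableOn (fun t ↦ g ((x / t) ^ a)) (Ioi 0) ↔
      IntegrableOn (fun y ↦ y ^ (-a⁻¹ - 1) • g y) (Ioi 0) := by
  have hscale := integrableOn_Ioi_comp_mul_left_iff (fun t ↦ g ((x / t) ^ a)) 0 hx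
  rw [mul_zero, integrableOn_congr_fun (eqOn_comp_div_mul_rpow g a hx.ne') measurableSet_Ioi]
    at hscale
  rw [← hscale,
    ← integrableOn_Ioi_comp_rpow_iff (fun y ↦ y ^ (-a⁻¹ - 1) • g y) (neg_ne_zero.mpr ha),
    integrableOn_congr_fun (eqOn_jacobian_smul_comp_rpow_neg g ha) measurableSet_Ioi]
  exact (integrable_fun_smul_iff (abs_pos.mpr ha).ne' _).symm

lemma integral_Ioi_comp_div_rpow (g : ℝ → E) {x a : ℝ} (hx : 0 < x) (ha : a ≠ 0) :
    ∫ t in Ioi 0, g ((x / t) ^ a) = (x / |a|) • ∫ y in Ioi 0, y ^ (-a⁻¹ - 1) • g y :=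
  calc ∫ t in Ioi 0, g ((x / t) ^ a)
      = x • ∫ s in Ioi 0, g (s ^ (-a)) := by
        rw [← setIntegral_congr_fun measurableSet_Ioi (eqOn_comp_div_mul_rpow g a hx.ne'),
          integral_comp_mul_left_Ioi' (fun t ↦ g ((x / t) ^ a)) 0 hx, mul_zero]
    _ = (x / |a|) • ∫ s in Ioi 0, |a| • g (s ^ (-a)) := by
        rw [integral_smul, smul_smul, div_mul_cancel₀ _ (abs_pos.mpr ha).ne']
    _ = _ := by
        rw [← setIntegral_congr_fun measurableSet_Ioi (eqOn_jacobian_smul_comp_rpow_neg g ha),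
          integral_comp_rpow_Ioi (fun y ↦ y ^ (-a⁻¹ - 1) • g y) (neg_ne_zero.mpr ha)]

end ChangeOfVariables

lemma one_sub_exp_neg_nonneg {y : ℝ} (hy : 0 ≤ y) : 0 ≤ 1 - exp (-y) := by
  linarith [exp_le_one_iff.mpr (neg_nonpos.mpr hy)]

lemma one_sub_exp_neg_le (y : ℝ) : 1 - exp (-y) ≤ y := by
  linarith [add_one_le_exp (-y)]

section GammaIntegral

variable {s : ℝ}

lemma integrableOn_Ioi_rpow_neg_mul_exp_neg (hs : s < 1) :
    IntegrableOn (fun y ↦ y ^ (-s) * exp (-y)) (Ioi 0) := by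
  simpa only [sub_sub_cancel_left, mul_comm (exp _)] using
    GammaIntegral_convergent (sub_pos.mpr hs)

lemma integral_Ioi_rpow_neg_mul_exp_neg (hs : s < 1) :
    ∫ y in Ioi 0, y ^ (-s) * exp (-y) = Gamma (1 - s) := by
  simp only [Gamma_eq_integral (sub_pos.mpr hs), sub_sub_cancel_left, mul_comm (exp _)]

lemma integrableOn_Ioi_rpow_neg_sub_one_mul_one_sub_exp_neg (hs0 : 0 < s) (hs1 : s < 1) :
    IntegrableOn (fun y ↦ y ^ (-s - 1) * (1 - exp (-y))) (Ioi 0) := by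
  have hmeas : AEStronglyMeasurable (fun y : ℝ ↦ y ^ (-s - 1) * (1 - exp (-y))) := by
    fun_prop
  rw [← Ioc_union_Ioi_eq_Ioi zero_le_one, integrableOn_union]
  constructor
  · have hdom : IntegrableOn (fun y : ℝ ↦ y ^ (-s)) (Ioc 0 1) :=
      (intervalIntegral.intervalIntegrable_rpow' (by linarith)).1
    refine hdom.mono' hmeas.restrict ((ae_restrict_mem measurableSet_Ioc).mono fun y hy ↦ ?_)
    have hy0 : 0 < y := hy.1
    rw [norm_of_nonneg (mul_nonneg (rpow_nonneg hy0.le _) (one_sub_exp_neg_nonneg hy0.le))]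
    calc y ^ (-s - 1) * (1 - exp (-y)) ≤ y ^ (-s - 1) * y :=
          mul_le_mul_of_nonneg_left (one_sub_exp_neg_le y) (rpow_nonneg hy0.le _)
      _ = y ^ (-s) := by rw [← rpow_add_one hy0.ne', sub_add_cancel]
  · have hdom : IntegrableOn (fun y : ℝ ↦ y ^ (-s - 1)) (Ioi 1) :=
      (integrableOn_Ioi_rpow_iff zero_lt_one).mpr (by linarith)
    refine hdom.mono' hmeas.restrict ((ae_restrict_mem measurableSet_Ioi).mono fun y hy ↦ ?_)
    have hy0 : 0 < y := zero_lt_one.trans hy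
    rw [norm_of_nonneg (mul_nonneg (rpow_nonneg hy0.le _) (one_sub_exp_neg_nonneg hy0.le))]
    exact mul_le_of_le_one_right (rpow_nonneg hy0.le _) (by linarith [exp_pos (-y)])

lemma tendsto_rpow_neg_mul_one_sub_exp_neg_nhdsGT_zero (hs : s < 1) :
    Tendsto (fun y ↦ y ^ (-s) * (1 - exp (-y))) (𝓝[>] 0) (𝓝 0) := by
  have hbound : Tendsto (fun y : ℝ ↦ y ^ (1 - s)) (𝓝[>] 0) (𝓝 0) := by
    simpa [zero_rpow (sub_pos.mpr hs).ne'] using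
      ((continuousAt_rpow_const 0 (1 - s) (Or.inr (sub_pos.mpr hs).le)).tendsto).mono_left
        nhdsWithin_le_nhds
  refine tendsto_of_tendsto_of_tendsto_of_le_of_le' tendsto_const_nhds hbound ?_ ?_ <;>
    filter_upwards [self_mem_nhdsWithin] with y (hy : 0 < y)
  · exact mul_nonneg (rpow_nonneg hy.le _) (one_sub_exp_neg_nonneg hy.le)
  · calc y ^ (-s) * (1 - exp (-y)) ≤ y ^ (-s) * y :=
          mul_le_mul_of_nonneg_left (one_sub_exp_neg_le y) (rpow_nonneg hy.le _)
      _ = y ^ (1 - s) := by rw [← rpow_add_one hy.ne', neg_add_eq_sub]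

lemma tendsto_rpow_neg_mul_one_sub_exp_neg_atTop (hs : 0 < s) :
    Tendsto (fun y ↦ y ^ (-s) * (1 - exp (-y))) atTop (𝓝 0) := by
  simpa using (tendsto_rpow_neg_atTop hs).mul
    ((tendsto_const_nhds (x := (1 : ℝ))).sub tendsto_exp_neg_atTop_nhds_zero)

lemma integral_Ioi_rpow_neg_sub_one_mul_one_sub_exp_neg (hs0 : 0 < s) (hs1 : s < 1) :
    ∫ y in Ioi 0, y ^ (-s - 1) * (1 - exp (-y)) = Gamma (1 - s) / s := by
  have hu : ∀ y ∈ Ioi (0 : ℝ), HasDerivAt (fun y ↦ y ^ (-s)) (-s * y ^ (-s - 1)) y :=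
    fun y hy ↦ hasDerivAt_rpow_const (Or.inl (ne_of_gt hy))
  have hv : ∀ y ∈ Ioi (0 : ℝ), HasDerivAt (fun y ↦ 1 - exp (-y)) (exp (-y)) y := fun y _ ↦ by
    simpa using ((hasDerivAt_neg y).exp).const_sub 1
  have hu'v : IntegrableOn (fun y ↦ -s * y ^ (-s - 1) * (1 - exp (-y))) (Ioi 0) := by
    simp_rw [mul_assoc]
    exact (integrableOn_Ioi_rpow_neg_sub_one_mul_one_sub_exp_neg hs0 hs1).const_mul (-s)
  have hparts := integral_Ioi_mul_deriv_eq_deriv_mul hu hv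
    (integrableOn_Ioi_rpow_neg_mul_exp_neg hs1) hu'v
    (tendsto_rpow_neg_mul_one_sub_exp_neg_nhdsGT_zero hs1)
    (tendsto_rpow_neg_mul_one_sub_exp_neg_atTop hs0)
  simp only [integral_Ioi_rpow_neg_mul_exp_neg hs1, mul_assoc, integral_const_mul] at hparts
  field_simp
  linarith

end GammaIntegral

/-- For `a > 1` and `x > 0`, `∫₀^∞ (1 - e^{-(x/t)^a}) dt` converges and equals
`x · Γ(1 - 1/a)`. -/
theorem stmt_17 (a x : ℝ) (ha : 1 < a) (hx : 0 < x) :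
    MeasureTheory.IntegrableOn (fun t : ℝ => 1 - Real.exp (-((x / t) ^ a)))
      (Set.Ioi 0)
    ∧ ∫ t in Set.Ioi (0 : ℝ), (1 - Real.exp (-((x / t) ^ a)))
        = x * Real.Gamma (1 - 1 / a) := by
  have ha0 : 0 < a := zero_lt_one.trans ha
  have hs0 : 0 < a⁻¹ := inv_pos.mpr ha0
  have hs1 : a⁻¹ < 1 := inv_lt_one_of_one_lt₀ ha
  constructor
  · exact (integrableOn_Ioi_comp_div_rpow_iff (fun y ↦ 1 - exp (-y)) hx ha0.ne').mpr
      (integrableOn_Ioi_rpow_neg_sub_one_mul_one_sub_exp_neg hs0 hs1)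
  · rw [integral_Ioi_comp_div_rpow (fun y ↦ 1 - exp (-y)) hx ha0.ne']
    simp only [smul_eq_mul]
    rw [integral_Ioi_rpow_neg_sub_one_mul_one_sub_exp_neg hs0 hs1, abs_of_pos ha0, one_div]
    field_simp
end
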